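/- In the CS-ETC clean-event analysis: if |μ̂ᵢ(t) - μᵢ| ≤ βᵢ(t) for all arms i and times t, and each arm has been pulled at least τ times, then for the arm I_t chosen at time t (the cheapest arm whose UCB exceeds (1-α) times the largest LCB), the quality gap satisfies (1-α)·μ_{m*} - μ_{I_t} ≤ 2(β_{I_t}(t) + β_{m*}(t)) ≤ 4√(2 log T / τ). -/
import Mathlib


theorem cs_etc_clean_event (K : ℕ) (μ μhat β : Fin K → ℝ) (α T τ : ℝ)
    (hα0 : 0 ≤ α) (hα1 : α < 1) (hτ : 0 < τ) (hlog : 0 ≤ Real.log T)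
    (n : Fin K → ℝ) (hn : ∀ i, τ ≤ n i)
    (hβ : ∀ i, β i = Real.sqrt (2 * Real.log T / n i))
    (hclean : ∀ i, |μhat i - μ i| ≤ β i)
    (mstar It : Fin K) (hmstar : ∀ i, μ i ≤ μ mstar)
    (hsel : μhat It + β It ≥ (1 - α) * (μhat mstar - β mstar)) :
    (1 - α) * μ mstar - μ It ≤ 2 * (β It + β mstar) ∧
    2 * (β It + β mstar) ≤ 4 * Real.sqrt (2 * Real.log T / τ) := by
  have hβnonneg : ∀ i, 0 ≤ β i := fun i => by
    rw [hβ i]; exact Real.sqrt_nonneg _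
  have h1 := abs_le.mp (hclean It)
  have h2 := abs_le.mp (hclean mstar)
  constructor
  · nlinarith [hβnonneg It, hβnonneg mstar, h1.1, h1.2, h2.1, h2.2]
  · have key : ∀ i, β i ≤ Real.sqrt (2 * Real.log T / τ) := by
      intro i
      rw [hβ i]
      apply Real.sqrt_le_sqrt
      apply div_le_div_of_nonneg_left (by linarith) hτ (hn i)
    linarith [key It, key mstar]
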